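/- arXiv:2510.18146 — 5 statements merged into one kernel-verified Lean document; each statement's English description precedes it below -/
import Mathlib

section
/- Let (c_n)_{n∈ℕ} be a sequence of real numbers with 1 ≤ c_n < c_{n+1} for all n and c_n → ∞, and suppose that for every k ∈ ℕ there exists M_k > 0 such that |c_i − c_j| ≤ M_k whenever |i − j| ≤ k. Define the linear operator D : V → V by Dξ = c_n ξ for ξ ∈ H_n (extended linearly to V). Let T be a bounded operator on H and suppose there is K ∈ ℕ such that for every n ∈ ℕ, T(H_n) is contained in the (finite) sum of the subspaces H_i over those i ∈ ℕ with |i − n| ≤ K. Then there exists a bounded operator S on H such that Sξ = D(Tξ) − T(Dξ) for every ξ ∈ V (note that Tξ ∈ V for ξ ∈ V, so this is well defined). -/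
open Submodule Filter
open scoped ComplexInnerProductSpace InnerProductSpace

/-! On `H n` the commutator is `ξ ↦ (D - c n) (T ξ)`, and `T ξ` lies in the band
`W n = ⨆_{|i - n| ≤ K} H i`, on which `D - c n` has norm at most `M_K` by Pythagoras. Hence
`[D, T]` maps `H n` into `W n` with norm at most `M_K ‖T‖`. Bands `W m`, `W n` are orthogonal as
soon as `|m - n| > 2K`, so grouping the components `ξ_n` of `ξ ∈ V` by the residue of `n` modulo
`2K + 1` writes `[D, T] ξ` as `2K + 1` sums of orthogonal vectors, and Pythagoras again gives
`‖[D, T] ξ‖ ≤ (2K + 1) M_K ‖T‖ ‖ξ‖` on the dense subspace `V`. -/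

section Orthogonal

variable {𝕜 E F : Type*} [RCLike 𝕜] [NormedAddCommGroup E] [InnerProductSpace 𝕜 E]
  [NormedAddCommGroup F] [InnerProductSpace 𝕜 F] {ι : Type*}

theorem norm_sum_sq_of_pairwise_inner_eq_zero {s : Finset ι} {v : ι → E}
    (hv : (s : Set ι).Pairwise fun i j => ⟪v i, v j⟫_𝕜 = 0) :
    ‖∑ i ∈ s, v i‖ ^ 2 = ∑ i ∈ s, ‖v i‖ ^ 2 := by
  have h : ((‖∑ i ∈ s, v i‖ ^ 2 : ℝ) : 𝕜) = ∑ i ∈ s, ((‖v i‖ ^ 2 : ℝ) : 𝕜) := by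
    simp only [RCLike.ofReal_pow, ← inner_self_eq_norm_sq_to_K, sum_inner, inner_sum]
    exact Finset.sum_congr rfl fun i hi =>
      Finset.sum_eq_single_of_mem i hi fun j hj hji => hv hj hi hji
  exact_mod_cast h

theorem norm_sum_le_of_pairwise_inner_eq_zero {s : Finset ι} {v : ι → E} {w : ι → F} {C : ℝ}
    (hv : (s : Set ι).Pairwise fun i j => ⟪v i, v j⟫_𝕜 = 0)
    (hw : (s : Set ι).Pairwise fun i j => ⟪w i, w j⟫_𝕜 = 0)
    (hC : 0 ≤ C) (hvw : ∀ i ∈ s, ‖v i‖ ≤ C * ‖w i‖) :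
    ‖∑ i ∈ s, v i‖ ≤ C * ‖∑ i ∈ s, w i‖ := by
  refine (sq_le_sq₀ (norm_nonneg _) (by positivity)).1 ?_
  rw [mul_pow, norm_sum_sq_of_pairwise_inner_eq_zero hv, norm_sum_sq_of_pairwise_inner_eq_zero hw,
    Finset.mul_sum]
  refine Finset.sum_le_sum fun i hi => ?_
  rw [← mul_pow]
  exact pow_le_pow_left₀ (norm_nonneg _) (hvw i hi) 2

theorem norm_sum_le_of_subset_of_pairwise_inner_eq_zero {s t : Finset ι} {w : ι → E}
    (hts : t ⊆ s) (hw : (s : Set ι).Pairwise fun i j => ⟪w i, w j⟫_𝕜 = 0) :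
    ‖∑ i ∈ t, w i‖ ≤ ‖∑ i ∈ s, w i‖ := by
  refine (sq_le_sq₀ (norm_nonneg _) (norm_nonneg _)).1 ?_
  rw [norm_sum_sq_of_pairwise_inner_eq_zero (hw.mono (by exact_mod_cast hts)),
    norm_sum_sq_of_pairwise_inner_eq_zero hw]
  exact Finset.sum_le_sum_of_subset_of_nonneg hts fun i _ _ => sq_nonneg _

/-- Vectors `v n` that are orthogonal as soon as their indices are more than `L` apart split
into the `L + 1` residue classes modulo `L + 1`, each of which is an orthogonal family. -/
theorem norm_sum_le_of_inner_eq_zero_of_separated (L : ℕ) {s : Finset ℕ} {v : ℕ → E} {w : ℕ → F}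
    {C : ℝ}
    (hv : ∀ m ∈ s, ∀ n ∈ s, (L : ℤ) < |(m : ℤ) - n| → ⟪v m, v n⟫_𝕜 = 0)
    (hw : (s : Set ℕ).Pairwise fun m n => ⟪w m, w n⟫_𝕜 = 0)
    (hC : 0 ≤ C) (hvw : ∀ n ∈ s, ‖v n‖ ≤ C * ‖w n‖) :
    ‖∑ n ∈ s, v n‖ ≤ (L + 1) * C * ‖∑ n ∈ s, w n‖ := by
  have hclass (r : ℕ) : ‖∑ n ∈ s with n % (L + 1) = r, v n‖ ≤ C * ‖∑ n ∈ s, w n‖ := by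
    have hsep : ((s.filter (· % (L + 1) = r) : Finset ℕ) : Set ℕ).Pairwise
        fun m n => ⟪v m, v n⟫_𝕜 = 0 := by
      intro m hm n hn hmn
      simp only [Finset.mem_coe, Finset.mem_filter] at hm hn
      have hdvd : ((L + 1 : ℕ) : ℤ) ∣ |(m : ℤ) - n| :=
        (dvd_abs _ _).2 (Nat.modEq_iff_dvd.1 (hn.2.trans hm.2.symm))
      refine hv m hm.1 n hn.1 (lt_of_lt_of_le (by omega) (Int.le_of_dvd ?_ hdvd))
      exact abs_pos.2 (sub_ne_zero.2 (by exact_mod_cast hmn))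
    calc ‖∑ n ∈ s with n % (L + 1) = r, v n‖
        ≤ C * ‖∑ n ∈ s with n % (L + 1) = r, w n‖ :=
          norm_sum_le_of_pairwise_inner_eq_zero hsep
            (hw.mono (by exact_mod_cast Finset.filter_subset _ s)) hC
            fun n hn => hvw n (Finset.mem_filter.1 hn).1
      _ ≤ C * ‖∑ n ∈ s, w n‖ :=
          mul_le_mul_of_nonneg_left
            (norm_sum_le_of_subset_of_pairwise_inner_eq_zero (Finset.filter_subset _ s) hw) hC
  calc ‖∑ n ∈ s, v n‖
      = ‖∑ r ∈ Finset.range (L + 1), ∑ n ∈ s with n % (L + 1) = r, v n‖ := by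
        rw [Finset.sum_fiberwise_of_maps_to fun n _ => Finset.mem_range.2 (Nat.mod_lt n L.succ_pos)]
    _ ≤ ∑ r ∈ Finset.range (L + 1), ‖∑ n ∈ s with n % (L + 1) = r, v n‖ := norm_sum_le _ _
    _ ≤ ∑ _r ∈ Finset.range (L + 1), C * ‖∑ n ∈ s, w n‖ := Finset.sum_le_sum fun r _ => hclass r
    _ = (L + 1) * C * ‖∑ n ∈ s, w n‖ := by
        rw [Finset.sum_const, Finset.card_range, nsmul_eq_mul, mul_assoc]; push_cast; ring


theorem isOrtho_biSup_of_disjoint {V : ι → Submodule 𝕜 E} (hV : Pairwise fun i j => V i ⟂ V j)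
    {S S' : Set ι} (h : Disjoint S S') : (⨆ i ∈ S, V i) ⟂ (⨆ j ∈ S', V j) := by
  simp only [isOrtho_iSup_left, isOrtho_iSup_right]
  exact fun i hi j hj => hV (h.ne_of_mem hj hi)

theorem norm_sub_smul_le_of_mem_biSup {V : ι → Submodule 𝕜 E}
    (hV : Pairwise fun i j => V i ⟂ V j) {D : E →ₗ[𝕜] E} {c : ι → ℝ}
    (hD : ∀ i, ∀ x ∈ V i, D x = (c i : 𝕜) • x) {S : Set ι} {a M : ℝ} (hM : 0 ≤ M)
    (hS : ∀ i ∈ S, |c i - a| ≤ M) {x : E} (hx : x ∈ ⨆ i ∈ S, V i) :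
    ‖D x - (a : 𝕜) • x‖ ≤ M * ‖x‖ := by
  rw [iSup_subtype'] at hx
  obtain ⟨f, hf, rfl⟩ := (mem_iSup_iff_exists_finsupp _ _).1 hx
  have horth : (f.support : Set S).Pairwise fun i j => ⟪f i, f j⟫_𝕜 = 0 := fun i _ j _ hij =>
    isOrtho_iff_inner_eq.1 (hV (Subtype.coe_ne_coe.2 hij)) _ (hf i) _ (hf j)
  have hterm (i : S) : D (f i) - (a : 𝕜) • f i = ((c i - a : ℝ) : 𝕜) • f i := by
    rw [hD i _ (hf i), RCLike.ofReal_sub, sub_smul]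
  simp only [Finsupp.sum, map_sum, Finset.smul_sum, ← Finset.sum_sub_distrib, hterm]
  refine norm_sum_le_of_pairwise_inner_eq_zero (fun i hi j hj hij => ?_) horth hM fun i _ => ?_
  · simp only [inner_smul_left, inner_smul_right, horth hi hj hij, mul_zero]
  · rw [norm_smul, RCLike.norm_ofReal]
    exact mul_le_mul_of_nonneg_right (hS i i.2) (norm_nonneg _)

theorem norm_apply_le_of_banded {V : ℕ → Submodule 𝕜 E} (hV : Pairwise fun m n => V m ⟂ V n)
    {W : ℕ → Submodule 𝕜 F} {L : ℕ} (hW : ∀ m n : ℕ, (L : ℤ) < |(m : ℤ) - n| → W m ⟂ W n)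
    {A : E →ₗ[𝕜] F} {C : ℝ} (hC : 0 ≤ C) (hAW : ∀ n, ∀ x ∈ V n, A x ∈ W n)
    (hA : ∀ n, ∀ x ∈ V n, ‖A x‖ ≤ C * ‖x‖) {x : E} (hx : x ∈ ⨆ n, V n) :
    ‖A x‖ ≤ (L + 1) * C * ‖x‖ := by
  obtain ⟨f, hf, rfl⟩ := (mem_iSup_iff_exists_finsupp _ _).1 hx
  simp only [Finsupp.sum, map_sum]
  exact norm_sum_le_of_inner_eq_zero_of_separated L
    (fun m _ n _ hmn => isOrtho_iff_inner_eq.1 (hW m n hmn) _ (hAW m _ (hf m)) _ (hAW n _ (hf n)))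
    (fun m _ n _ hmn => isOrtho_iff_inner_eq.1 (hV hmn) _ (hf m) _ (hf n)) hC
    fun n _ => hA n _ (hf n)

end Orthogonal

theorem LinearMap.exists_continuousLinearMap_eq_of_dense {𝕜 E F : Type*}
    [NontriviallyNormedField 𝕜] [NormedAddCommGroup E] [NormedSpace 𝕜 E]
    [NormedAddCommGroup F] [NormedSpace 𝕜 F] [CompleteSpace F] (f : E →ₗ[𝕜] F)
    {p : Submodule 𝕜 E} (hp : Dense (p : Set E)) {C : ℝ} (hf : ∀ x ∈ p, ‖f x‖ ≤ C * ‖x‖) :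
    ∃ g : E →L[𝕜] F, ∀ x ∈ p, g x = f x := by
  let g₀ : p →L[𝕜] F := (f ∘ₗ p.subtype).mkContinuous C fun x => hf x x.2
  refine ⟨g₀.extend p.subtypeL, fun x hx => ?_⟩
  exact g₀.extend_eq hp.denseRange_val isUniformEmbedding_subtype_val.isUniformInducing ⟨x, hx⟩

theorem stmt0_general
    {H : Type*} [NormedAddCommGroup H] [InnerProductSpace ℂ H] [CompleteSpace H]
    (Hn : ℕ → Submodule ℂ H)
    (horth : ∀ m n : ℕ, m ≠ n → ∀ x ∈ Hn m, ∀ y ∈ Hn n, ⟪x, y⟫ = 0)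
    (hdense : Dense ((⨆ n, Hn n : Submodule ℂ H) : Set H))
    (c : ℕ → ℝ)
    (hband : ∀ k : ℕ, ∃ M : ℝ, 0 < M ∧
      ∀ i j : ℕ, |(i : ℤ) - (j : ℤ)| ≤ (k : ℤ) → |c i - c j| ≤ M)
    (D : H →ₗ[ℂ] H)
    (hD : ∀ n : ℕ, ∀ ξ ∈ Hn n, D ξ = (c n : ℂ) • ξ)
    (T : H →L[ℂ] H) (K : ℕ)
    (hT : ∀ n : ℕ, ∀ ξ ∈ Hn n,
      T ξ ∈ (⨆ i ∈ {i : ℕ | |(i : ℤ) - (n : ℤ)| ≤ (K : ℤ)}, Hn i : Submodule ℂ H)) :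
    ∃ S : H →L[ℂ] H, ∀ ξ ∈ (⨆ n, Hn n : Submodule ℂ H), S ξ = D (T ξ) - T (D ξ) := by
  obtain ⟨M, hM, hcM⟩ := hband K
  have hHn : Pairwise fun m n => Hn m ⟂ Hn n := fun m n hmn =>
    isOrtho_iff_inner_eq.2 (horth m n hmn)
  let W (n : ℕ) : Submodule ℂ H := ⨆ i ∈ {i : ℕ | |(i : ℤ) - (n : ℤ)| ≤ (K : ℤ)}, Hn i
  have hW (m n : ℕ) (hmn : ((2 * K : ℕ) : ℤ) < |(m : ℤ) - n|) : W m ⟂ W n := by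
    refine isOrtho_biSup_of_disjoint hHn (Set.disjoint_left.2 fun i hm hn => ?_)
    simp only [Set.mem_ofPred_eq, abs_le, lt_abs] at hm hn hmn
    omega
  have hDW (n : ℕ) : W n ≤ (W n).comap D := iSup₂_le fun i hi x hx => by
    rw [Submodule.mem_comap, hD i x hx]
    exact smul_mem _ _ (mem_iSup_of_mem i (mem_iSup_of_mem hi hx))
  let A : H →ₗ[ℂ] H := D ∘ₗ T.toLinearMap - T.toLinearMap ∘ₗ D
  have hA (n : ℕ) (ξ : H) (hξ : ξ ∈ Hn n) : A ξ = D (T ξ) - (c n : ℂ) • T ξ := by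
    simp [A, hD n ξ hξ]
  refine A.exists_continuousLinearMap_eq_of_dense hdense fun ξ hξ =>
    norm_apply_le_of_banded hHn hW (C := M * ‖T‖) (by positivity)
      (fun n ξ hξ => ?_) (fun n ξ hξ => ?_) hξ
  · rw [hA n ξ hξ]
    exact sub_mem (hDW n (hT n ξ hξ)) (smul_mem _ _ (hT n ξ hξ))
  · calc ‖A ξ‖ = ‖D (T ξ) - (c n : ℂ) • T ξ‖ := by rw [hA n ξ hξ]
      _ ≤ M * ‖T ξ‖ :=
        norm_sub_smul_le_of_mem_biSup hHn hD hM.le (fun i hi => hcM i n hi) (hT n ξ hξ)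
      _ ≤ M * ‖T‖ * ‖ξ‖ := by
        rw [mul_assoc]
        exact mul_le_mul_of_nonneg_left (T.le_opNorm ξ) hM.le

/-- Let `H` be a complex Hilbert space and `(Hn n)` a family of pairwise
orthogonal finite-dimensional subspaces whose algebraic sum `V = ⨆ n, Hn n` is dense in `H`.
Let `(c n)` be a sequence of reals with `1 ≤ c n < c (n+1)`, `c n → ∞`, and such that for every
`k` there is `M > 0` with `|c i − c j| ≤ M` whenever `|i − j| ≤ k`.  Let `D` be a linear operator
acting on each `Hn n` as multiplication by `c n`, and let `T` be a bounded operator such that for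
some `K`, `T (Hn n) ⊆ Σ_{|i−n| ≤ K} Hn i` for all `n`.  Then the commutator `D T − T D`, defined
on `V`, extends to a bounded operator `S` on `H`. -/
theorem stmt0
    {H : Type*} [NormedAddCommGroup H] [InnerProductSpace ℂ H] [CompleteSpace H]
    (Hn : ℕ → Submodule ℂ H)
    (horth : ∀ m n : ℕ, m ≠ n → ∀ x ∈ Hn m, ∀ y ∈ Hn n, ⟪x, y⟫ = 0)
    (hfin : ∀ n, FiniteDimensional ℂ (Hn n))
    (hdense : Dense ((⨆ n, Hn n : Submodule ℂ H) : Set H))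
    (c : ℕ → ℝ)
    (hc1 : ∀ n, 1 ≤ c n)
    (hcmono : ∀ n, c n < c (n + 1))
    (hctop : Tendsto c atTop atTop)
    (hband : ∀ k : ℕ, ∃ M : ℝ, 0 < M ∧
      ∀ i j : ℕ, |(i : ℤ) - (j : ℤ)| ≤ (k : ℤ) → |c i - c j| ≤ M)
    (D : H →ₗ[ℂ] H)
    (hD : ∀ n : ℕ, ∀ ξ ∈ Hn n, D ξ = (c n : ℂ) • ξ)
    (T : H →L[ℂ] H) (K : ℕ)
    (hT : ∀ n : ℕ, ∀ ξ ∈ Hn n,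
      T ξ ∈ (⨆ i ∈ {i : ℕ | |(i : ℤ) - (n : ℤ)| ≤ (K : ℤ)}, Hn i : Submodule ℂ H)) :
    ∃ S : H →L[ℂ] H, ∀ ξ ∈ (⨆ n, Hn n : Submodule ℂ H), S ξ = D (T ξ) - T (D ξ) :=
  stmt0_general Hn horth hdense c hband D hD T K hT
end

section
/- Let m ≥ 1 and n₁, n₂ ≥ 0. If μ ∈ Φ_{n₁}^m and ν ∈ Φ_{n₂}^m and μ ⩓ ν, then either μ extends ν or ν extends μ. -/
/-! Combinatorial model of the Mitscher–Spielberg category of paths `Λ`. -/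

/-- The letters (edges) of the category of paths: `A = α`, `B = β`, and the `Λ₂`-edges
`G j = γ^{(j)}`. -/
inductive Letter : Type
  | A : Letter
  | B : Letter
  | G : ℕ → Letter
  deriving DecidableEq

/-- A letter lies in `{α, β}` (i.e. is a `Λ₁`-edge). -/
def Letter.isAB : Letter → Prop
  | .A => True
  | .B => True
  | .G _ => False

/-- `w` is a path from the vertex `v_m`: the `t`-th entry (1-indexed), if equal to `G j`,
must satisfy `1 ≤ j ≤ k (m + t − 1)`. -/
def IsPath (k : ℕ → ℕ) (m : ℕ) (w : List Letter) : Prop :=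
  ∀ t : Fin w.length, ∀ j : ℕ, w.get t = Letter.G j → 1 ≤ j ∧ j ≤ k (m + (t : ℕ))

/-- One elementary move: transpose two adjacent entries which both lie in `{α, β}`. -/
def Swap (w₁ w₂ : List Letter) : Prop :=
  ∃ (u v : List Letter) (a b : Letter), a.isAB ∧ b.isAB ∧
    w₁ = u ++ a :: b :: v ∧ w₂ = u ++ b :: a :: v

/-- The equivalence relation `≈` generated by the elementary moves; classes of paths from `v_m`
are the elements of `Λ(m)`. -/
def PEqv : List Letter → List Letter → Prop := Relation.EqvGen Swap

/-- The class of `μ` extends the class of `ν` (i.e. `μ = ν·ξ` for some class `ξ`). -/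
def PExtends (μ ν : List Letter) : Prop := ∃ ξ : List Letter, PEqv μ (ν ++ ξ)

/-- The class of `μ` extends the class of `ν` nontrivially. -/
def PExtendsNontrivially (μ ν : List Letter) : Prop :=
  ∃ ξ : List Letter, ξ ≠ [] ∧ PEqv μ (ν ++ ξ)

/-- `μ ⩓ ν`: the classes of `μ` and `ν` admit a common extension in `Λ(m)`. -/
def Meets (k : ℕ → ℕ) (m : ℕ) (μ ν : List Letter) : Prop :=
  ∃ l : List Letter, IsPath k m l ∧ PExtends l μ ∧ PExtends l ν

/-- The class of `w` belongs to `Φ_n^m ⊆ Λ(m)`: either `w` is empty, or `1 ≤ |w| ≤ n` and the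
last letter of `w` is of the form `G j`. -/
def InPhi (n : ℕ) (w : List Letter) : Prop :=
  w = [] ∨ (1 ≤ w.length ∧ w.length ≤ n ∧ ∃ j : ℕ, w.getLast? = some (Letter.G j))

/-! A swap only moves letters in `{A, B}`, so a letter `G j` never moves and no swap straddles
the cut just after it: `≈` respects that cut. If `μ` ends in `G j`, `|μ| ≤ |ν|` and
`μ·ξ₁ ≈ ν·ξ₂`, cutting after position `|μ|` gives `μ ≈` the prefix of `ν` of length `|μ|`. -/

open Relation

instance : Std.Symm Swap where
  symm _ _ := fun ⟨u, v, a, b, ha, hb, h₁, h₂⟩ => ⟨u, v, b, a, hb, ha, h₂, h₁⟩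

theorem peqv_iff_reflTransGen {w₁ w₂ : List Letter} : PEqv w₁ w₂ ↔ ReflTransGen Swap w₁ w₂ := by
  rw [PEqv, EqvGen.eqvGen_eq_reflTransGen]

theorem PEqv.append_right {w₁ w₂ : List Letter} (h : PEqv w₁ w₂) (c : List Letter) :
    PEqv (w₁ ++ c) (w₂ ++ c) :=
  peqv_iff_reflTransGen.mpr <| (peqv_iff_reflTransGen.mp h).lift (· ++ c)
    fun _ _ ⟨u, v, a, b, ha, hb, h₁, h₂⟩ => ⟨u, v ++ c, a, b, ha, hb, by simp [h₁], by simp [h₂]⟩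

namespace Swap

variable {w₁ w₂ : List Letter} {p : ℕ} {c : Letter}

theorem getElem?_eq_of_not_isAB (h : Swap w₁ w₂) (hp : w₁[p]? = some c) (hc : ¬c.isAB) :
    w₂[p]? = some c := by
  obtain ⟨u, v, a, b, ha, hb, rfl, rfl⟩ := h
  rcases lt_or_ge p u.length with hpu | hpu
  · rwa [List.getElem?_append_left hpu] at hp ⊢
  obtain ⟨q, rfl⟩ := Nat.exists_eq_add_of_le hpu
  rw [List.getElem?_append_right hpu, Nat.add_sub_cancel_left] at hp ⊢
  match q, hp with
  | 0, hp => cases hp; exact absurd ha hc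
  | 1, hp => cases hp; exact absurd hb hc
  | _ + 2, hp => simpa using hp

theorem take_succ_of_not_isAB (h : Swap w₁ w₂) (hp : w₁[p]? = some c) (hc : ¬c.isAB) :
    ReflGen Swap (w₁.take (p + 1)) (w₂.take (p + 1)) := by
  obtain ⟨u, v, a, b, ha, hb, rfl, rfl⟩ := h
  rcases lt_or_ge p u.length with hpu | hpu
  · rw [List.take_append_of_le_length hpu, List.take_append_of_le_length hpu]
  obtain ⟨q, rfl⟩ := Nat.exists_eq_add_of_le hpu
  rw [List.getElem?_append_right hpu, Nat.add_sub_cancel_left] at hp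
  match q, hp with
  | 0, hp => cases hp; exact absurd ha hc
  | 1, hp => cases hp; exact absurd hb hc
  | q + 2, _ =>
    refine .single ⟨u, v.take (q + 1), a, b, ha, hb, ?_, ?_⟩ <;>
      simp (disch := omega) [List.take_append, List.take_of_length_le,
        show u.length + (q + 2) + 1 - u.length = q + 1 + 2 by omega]

end Swap

theorem PEqv.take_succ_of_not_isAB {w₁ w₂ : List Letter} {p : ℕ} {c : Letter}
    (h : PEqv w₁ w₂) (hp : w₁[p]? = some c) (hc : ¬c.isAB) :
    PEqv (w₁.take (p + 1)) (w₂.take (p + 1)) := by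
  suffices w₂[p]? = some c ∧ PEqv (w₁.take (p + 1)) (w₂.take (p + 1)) from this.2
  rw [peqv_iff_reflTransGen] at h
  induction h with
  | refl => exact ⟨hp, .refl _⟩
  | tail _ hs ih =>
    exact ⟨hs.getElem?_eq_of_not_isAB ih.1 hc,
      ih.2.trans _ _ _ (EqvGen.reflGen_le_eqvGen _ _ _ (hs.take_succ_of_not_isAB ih.1 hc))⟩

theorem PExtends.of_peqv_append {μ ν ξ₁ ξ₂ : List Letter} {c : Letter}
    (hμ : μ.getLast? = some c) (hc : ¬c.isAB) (hlen : μ.length ≤ ν.length)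
    (h : PEqv (μ ++ ξ₁) (ν ++ ξ₂)) : PExtends ν μ := by
  have hμ₀ : μ.length ≠ 0 := by rintro h₀; simp [List.length_eq_zero_iff.mp h₀] at hμ
  have hlast : (μ ++ ξ₁)[μ.length - 1]? = some c := by
    rwa [List.getElem?_append_left (by omega), ← List.getLast?_eq_getElem?]
  have hμν : PEqv μ (ν.take μ.length) := by
    simpa only [Nat.sub_add_cancel (Nat.pos_of_ne_zero hμ₀), List.take_left,
      List.take_append_of_le_length hlen] using h.take_succ_of_not_isAB hlast hc
  refine ⟨ν.drop μ.length, ?_⟩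
  simpa only [List.take_append_drop] using PEqv.append_right (.symm _ _ hμν) (ν.drop μ.length)

theorem stmt3_general (k : ℕ → ℕ) (m n₁ n₂ : ℕ)
    (μ ν : List Letter)
    (hμΦ : InPhi n₁ μ) (hνΦ : InPhi n₂ ν) (hmeet : Meets k m μ ν) :
    PExtends μ ν ∨ PExtends ν μ := by
  rcases hμΦ with rfl | ⟨-, -, jμ, hμG⟩
  · exact Or.inr ⟨ν, .refl ν⟩
  rcases hνΦ with rfl | ⟨-, -, jν, hνG⟩
  · exact Or.inl ⟨μ, .refl μ⟩
  obtain ⟨l, -, ⟨ξ₁, hl₁⟩, ⟨ξ₂, hl₂⟩⟩ := hmeet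
  have h : PEqv (μ ++ ξ₁) (ν ++ ξ₂) := (EqvGen.symm _ _ hl₁).trans _ _ _ hl₂
  rcases le_total μ.length ν.length with hle | hle
  · exact Or.inr (.of_peqv_append hμG id hle h)
  · exact Or.inl (.of_peqv_append hνG id hle (EqvGen.symm _ _ h))

/-- Proposition: `Φ`-classes that meet are comparable.  Let `m ≥ 1` and
`n₁, n₂ ≥ 0`.  If `μ ∈ Φ_{n₁}^m`, `ν ∈ Φ_{n₂}^m` and `μ ⩓ ν`, then one of `μ, ν` extends the
other. -/
theorem stmt3 (k : ℕ → ℕ) (hk0 : k 0 = 0) (m n₁ n₂ : ℕ) (hm : 1 ≤ m)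
    (μ ν : List Letter) (hμ : IsPath k m μ) (hν : IsPath k m ν)
    (hμΦ : InPhi n₁ μ) (hνΦ : InPhi n₂ ν) (hmeet : Meets k m μ ν) :
    PExtends μ ν ∨ PExtends ν μ :=
  stmt3_general k m n₁ n₂ μ ν hμΦ hνΦ hmeet
end

section
/- Let j ≥ 1, ℓ ≥ 0, m = p_j + ℓ + 1, j' ≥ j and ℓ' ≥ m. Suppose (μ, ν) ∈ S_j and (μ', ν') ∈ S_{j'}. Let δ = μ·α^r and ε = ν·β^s, where r = p_j + ℓ − |μ| and s = p_j + ℓ − |ν| (so |δ| = |ε| = p_j + ℓ), and let (δ', ε') = (μ'·c^{r'}, ν'·d^{s'}) ∈ S_{j',ℓ'}, where {c, d} = {α, β}. If ε ⩓ δ', then either μ' = ν, or μ' is a nontrivial extension of ε. -/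
/-- A `Λ₁`-word: all letters lie in `{α, β}`. -/
def IsLambda1 (w : List Letter) : Prop := ∀ a ∈ w, a.isAB

/-- The degrees `d(η) = (#α's, #β's)` and `d(θ)` are orthogonal in `ℕ²`. -/
def DegPerp (η θ : List Letter) : Prop :=
  η.count Letter.A * θ.count Letter.A + η.count Letter.B * θ.count Letter.B = 0

/-- `p : ℕ → ℕ` enumerates `{i ≥ 1 : k i ≠ 0}` in increasing order, with `p 0 = 0`. -/
def Enumerates (k p : ℕ → ℕ) : Prop :=
  p 0 = 0 ∧ StrictMono p ∧ (∀ j, 1 ≤ j → 1 ≤ p j ∧ k (p j) ≠ 0) ∧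
    ∀ i, 1 ≤ i → k i ≠ 0 → ∃ j, p j = i

/-- `(μ, ν) ∈ S_j`: both classes lie in `Φ_{p_j} = Φ_{p_j}^1 ⊆ Λ(1)` and at least one of them
has length `p_j`. -/
def InS (k p : ℕ → ℕ) (j : ℕ) (μ ν : List Letter) : Prop :=
  IsPath k 1 μ ∧ IsPath k 1 ν ∧ InPhi (p j) μ ∧ InPhi (p j) ν ∧
    (μ.length = p j ∨ ν.length = p j)

/-- `(δ, ε) ∈ S_{j,ℓ}`: `δ = μ·η` and `ε = ν·θ` with `(μ, ν) ∈ S_j`, `η, θ` `Λ₁`-words,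
`|δ| = |ε| = p_j + ℓ`, and `d(η) ⊥ d(θ)`. -/
def InSJL (k p : ℕ → ℕ) (j ℓ : ℕ) (δ ε : List Letter) : Prop :=
  ∃ μ ν η θ : List Letter, InS k p j μ ν ∧ IsLambda1 η ∧ IsLambda1 θ ∧
    PEqv δ (μ ++ η) ∧ PEqv ε (ν ++ θ) ∧
    δ.length = p j + ℓ ∧ ε.length = p j + ℓ ∧ DegPerp η θ

/-! The positions of the letters `G j` in a path are invariants of `≈`, and a path ending in a
`G j` splits off in normal form: `nf (x ++ y) = nf x ++ nf y`. So if
`μ'·c^{r'}·ξ' ≈ ν·β^s·ξ` is a common extension, the last `G` of `ν` has to lie inside `μ'`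
(everything after `μ'` up to position `|δ'| ≥ |ν|` is a `c`), while the last `G` of `μ'` cannot
fall among the `β`s after `ν`. Cutting both sides after position `|μ'|` then gives `μ' ≈ ν` or
`μ' ≈ ν·β^s·ξ₀` with `ξ₀` a nonempty prefix of `ξ`. -/

namespace PEqv

theorem refl (w : List Letter) : PEqv w w := Relation.EqvGen.refl w

theorem symm {w₁ w₂ : List Letter} (h : PEqv w₁ w₂) : PEqv w₂ w₁ :=
  Relation.EqvGen.symm _ _ h

theorem trans {w₁ w₂ w₃ : List Letter} (h₁ : PEqv w₁ w₂) (h₂ : PEqv w₂ w₃) : PEqv w₁ w₃ :=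
  Relation.EqvGen.trans _ _ _ h₁ h₂

theorem swap {a b : Letter} (ha : a.isAB) (hb : b.isAB) (t : List Letter) :
    PEqv (a :: b :: t) (b :: a :: t) :=
  Relation.EqvGen.rel _ _ ⟨[], t, a, b, ha, hb, rfl, rfl⟩

theorem eq_of_swap_invariant {β : Type*} {f : List Letter → β}
    (hf : ∀ w₁ w₂, Swap w₁ w₂ → f w₁ = f w₂) {w₁ w₂ : List Letter} (h : PEqv w₁ w₂) :
    f w₁ = f w₂ :=
  congrArg (Quot.lift f hf) (Quot.eqvGen_sound h)

theorem append_left {w₁ w₂ : List Letter} (u : List Letter) (h : PEqv w₁ w₂) :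
    PEqv (u ++ w₁) (u ++ w₂) := by
  induction h with
  | rel _ _ h =>
    obtain ⟨u₀, v₀, a, b, ha, hb, rfl, rfl⟩ := h
    exact Relation.EqvGen.rel _ _ ⟨u ++ u₀, v₀, a, b, ha, hb, by simp, by simp⟩
  | refl => exact refl _
  | symm _ _ _ ih => exact ih.symm
  | trans _ _ _ _ _ ih₁ ih₂ => exact ih₁.trans ih₂

end PEqv

theorem IsLambda1.peqv_append_cons {u : List Letter} (hu : IsLambda1 u) {a : Letter}
    (ha : a.isAB) (t : List Letter) : PEqv (u ++ a :: t) (a :: (u ++ t)) := by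
  induction u with
  | nil => exact PEqv.refl _
  | cons x u ih =>
    have hx : x.isAB := hu x (List.mem_cons_self ..)
    exact ((ih fun b hb => hu b (List.mem_cons_of_mem _ hb)).append_left [x]).trans
      (PEqv.swap hx ha _)

def Letter.gIndex : Letter → Option ℕ
  | .G j => some j
  | _ => none

theorem Swap.map_gIndex {w₁ w₂ : List Letter} (h : Swap w₁ w₂) :
    w₁.map Letter.gIndex = w₂.map Letter.gIndex := by
  obtain ⟨u, v, a, b, ha, hb, rfl, rfl⟩ := h
  cases a <;> cases b <;> simp_all [Letter.gIndex, Letter.isAB]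

theorem PEqv.length_eq {w₁ w₂ : List Letter} (h : PEqv w₁ w₂) : w₁.length = w₂.length := by
  simpa using congrArg List.length (h.eq_of_swap_invariant fun _ _ => Swap.map_gIndex)

theorem getElem?_eq_G_iff_gIndex (w : List Letter) (t i : ℕ) :
    w[t]? = some (.G i) ↔ (w.map Letter.gIndex)[t]? = some (some i) := by
  rw [List.getElem?_map]
  rcases w[t]? with _ | (_ | _ | _) <;> simp [Letter.gIndex]

theorem PEqv.getElem?_eq_G_iff {w₁ w₂ : List Letter} (h : PEqv w₁ w₂) (t i : ℕ) :
    w₁[t]? = some (.G i) ↔ w₂[t]? = some (.G i) := by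
  rw [getElem?_eq_G_iff_gIndex, getElem?_eq_G_iff_gIndex,
    h.eq_of_swap_invariant fun _ _ => Swap.map_gIndex]

/-- Normal form for `≈`: each maximal `{α, β}`-block is sorted as `α^a β^b`. The counters hold
the numbers of `α`s and `β`s of the current block read so far. -/
def nfAux : ℕ → ℕ → List Letter → List Letter
  | na, nb, [] => List.replicate na .A ++ List.replicate nb .B
  | na, nb, .A :: t => nfAux (na + 1) nb t
  | na, nb, .B :: t => nfAux na (nb + 1) t
  | na, nb, .G j :: t => List.replicate na .A ++ List.replicate nb .B ++ .G j :: nfAux 0 0 t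

def nf (w : List Letter) : List Letter := nfAux 0 0 w

theorem Swap.nf_eq {w₁ w₂ : List Letter} (h : Swap w₁ w₂) : nf w₁ = nf w₂ := by
  obtain ⟨u, v, a, b, ha, hb, rfl, rfl⟩ := h
  suffices ∀ na nb, nfAux na nb (u ++ a :: b :: v) = nfAux na nb (u ++ b :: a :: v) from
    this 0 0
  induction u with
  | nil => cases a <;> cases b <;> simp_all [nfAux, Letter.isAB]
  | cons x t ih => intro na nb; cases x <;> simp [nfAux, ih]

theorem peqv_nf (w : List Letter) : PEqv w (nf w) := by
  suffices ∀ na nb, PEqv (List.replicate na .A ++ List.replicate nb .B ++ w) (nfAux na nb w) by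
    simpa [nf] using this 0 0
  induction w with
  | nil => intro na nb; simpa [nfAux] using PEqv.refl _
  | cons x t ih =>
    intro na nb
    cases x with
    | A =>
      have hB : IsLambda1 (List.replicate nb .B) := by simp [IsLambda1, Letter.isAB]
      have := (hB.peqv_append_cons (a := .A) trivial t).append_left (List.replicate na .A)
      simpa [nfAux, List.replicate_succ'] using
        this.trans (by simpa [List.replicate_succ'] using ih (na + 1) nb)
    | B => simpa [nfAux, List.replicate_succ'] using ih na (nb + 1)
    | G i =>
      have := (ih 0 0).append_left (List.replicate na .A ++ List.replicate nb .B ++ [.G i])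
      simpa [nfAux] using this

theorem peqv_of_nf_eq {w₁ w₂ : List Letter} (h : nf w₁ = nf w₂) : PEqv w₁ w₂ :=
  (peqv_nf w₁).trans (h ▸ (peqv_nf w₂).symm)

theorem nf_length (w : List Letter) : (nf w).length = w.length :=
  (peqv_nf w).length_eq.symm

theorem nf_append_of_getLast?_eq_G {x : List Letter} {i : ℕ} (hx : x.getLast? = some (.G i))
    (y : List Letter) : nf (x ++ y) = nf x ++ nf y := by
  obtain ⟨u, rfl⟩ := List.getLast?_eq_some_iff.1 hx
  suffices ∀ na nb, nfAux na nb (u ++ .G i :: y) = nfAux na nb (u ++ [.G i]) ++ nfAux 0 0 y by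
    simpa [nf] using this 0 0
  induction u with
  | nil => simp [nfAux]
  | cons x t ih => intro na nb; cases x <;> simp [nfAux, ih]

theorem List.getElem?_append_length_sub_one {α : Type*} {x : List α} {a : α}
    (hx : x.getLast? = some a) (y : List α) : (x ++ y)[x.length - 1]? = some a := by
  have hx0 : 0 < x.length := List.length_pos_iff.2 (by rintro rfl; simp at hx)
  rw [List.getElem?_append_left (by omega), ← List.getLast?_eq_getElem?, hx]

theorem PEqv.peqv_take {x y z : List Letter} {i : ℕ} (hx : x.getLast? = some (.G i))
    (h : PEqv (x ++ y) z) : PEqv x (z.take x.length) := by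
  have hlen : x.length ≤ z.length := by simp [← h.length_eq]
  have hx0 : x ≠ [] := by rintro rfl; simp at hx
  have hz : (z.take x.length).getLast? = some (.G i) := by
    rw [List.getLast?_eq_getElem?, List.getElem?_take]
    simpa [hlen, List.length_pos_iff.2 hx0] using
      (h.getElem?_eq_G_iff _ _).1 (List.getElem?_append_length_sub_one hx y)
  have hnf := h.eq_of_swap_invariant fun _ _ => Swap.nf_eq
  rw [← List.take_append_drop x.length z, nf_append_of_getLast?_eq_G hx,
    nf_append_of_getLast?_eq_G hz] at hnf
  exact peqv_of_nf_eq (List.append_inj hnf (by simp [nf_length, hlen])).1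

theorem getElem?_append_replicate_append_ne_G {u v : List Letter} {a : Letter} (ha : a.isAB)
    {n t : ℕ} (h₁ : u.length ≤ t) (h₂ : t < u.length + n) (i : ℕ) :
    (u ++ (List.replicate n a ++ v))[t]? ≠ some (.G i) := by
  rw [List.getElem?_append_right h₁, List.getElem?_append_left (by simp; omega),
    List.getElem?_replicate, if_pos (by omega)]
  rintro ⟨⟩
  exact ha

theorem peqv_or_extendsNontrivially_of_peqv {ν μ' ξ ξ' : List Letter} {a c : Letter} {s r : ℕ}
    (ha : a.isAB) (hc : c.isAB) (hν : ν = [] ∨ ∃ i, ν.getLast? = some (.G i))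
    (hμ' : μ' = [] ∨ ∃ i, μ'.getLast? = some (.G i)) (hlen : ν.length ≤ μ'.length + r)
    (h : PEqv (μ' ++ (List.replicate r c ++ ξ')) (ν ++ (List.replicate s a ++ ξ))) :
    PEqv μ' ν ∨ PExtendsNontrivially μ' (ν ++ List.replicate s a) := by
  have hνμ' : ν.length ≤ μ'.length := by
    by_contra! hlt
    obtain ⟨i, hi⟩ := hν.resolve_left (by rintro rfl; simp at hlt)
    exact getElem?_append_replicate_append_ne_G hc (by omega) (by omega) i
      ((h.getElem?_eq_G_iff _ _).2 (List.getElem?_append_length_sub_one hi _))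
  rcases hμ' with rfl | ⟨i, hi⟩
  · left
    rw [List.eq_nil_of_length_eq_zero (Nat.le_zero.1 hνμ')]
    exact PEqv.refl _
  have hLi := (h.getElem?_eq_G_iff _ _).1 (List.getElem?_append_length_sub_one hi _)
  have htake := h.peqv_take hi
  rcases hνμ'.eq_or_lt with heq | hlt
  · left
    rwa [← heq, List.take_left] at htake
  · right
    have hs : ν.length + s < μ'.length := by
      by_contra! hle
      exact getElem?_append_replicate_append_ne_G ha (by omega) (by omega) i hLi
    have hξ : μ'.length - (ν.length + s) ≤ ξ.length := by
      have := h.length_eq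
      simp at this
      omega
    refine ⟨ξ.take (μ'.length - (ν.length + s)), ?_, ?_⟩
    · rw [Ne, List.take_eq_nil_iff, ← List.length_eq_zero_iff]
      omega
    · simpa [List.take_append, List.take_of_length_le hlt.le,
        Nat.min_eq_right (by omega : s ≤ μ'.length - ν.length), Nat.sub_sub] using htake

theorem InPhi.length_le {n : ℕ} {w : List Letter} (h : InPhi n w) : w.length ≤ n := by
  rcases h with rfl | h
  · simp
  · exact h.2.1

theorem InPhi.eq_nil_or_getLast?_eq_G {n : ℕ} {w : List Letter} (h : InPhi n w) :
    w = [] ∨ ∃ i, w.getLast? = some (.G i) :=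
  h.imp_right fun h => h.2.2

theorem stmt4_general (k : ℕ → ℕ)
    (p : ℕ → ℕ) (hp : Enumerates k p)
    (j j' ℓ' : ℕ) (hj' : j ≤ j')
    (μ ν μ' ν' : List Letter) (hS : InS k p j μ ν) (hS' : InS k p j' μ' ν')
    (s : ℕ)
    (ε : List Letter)
    (hε : ε = ν ++ List.replicate s Letter.B)
    (c d : Letter) (hcd : (c = Letter.A ∧ d = Letter.B) ∨ (c = Letter.B ∧ d = Letter.A))
    (r' : ℕ) (δ' ε' : List Letter)
    (hδ' : δ' = μ' ++ List.replicate r' c)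
    (hSJL : InSJL k p j' ℓ' δ' ε')
    (hmeet : Meets k 1 ε δ') :
    PEqv μ' ν ∨ PExtendsNontrivially μ' ε := by
  have hc : c.isAB := by rcases hcd with ⟨rfl, -⟩ | ⟨rfl, -⟩ <;> trivial
  have hlen : ν.length ≤ μ'.length + r' :=
    calc ν.length ≤ p j := hS.2.2.2.1.length_le
      _ ≤ p j' := hp.2.1.monotone hj'
      _ ≤ δ'.length := by obtain ⟨-, -, -, -, -, -, -, -, -, h, -⟩ := hSJL; omega
      _ = μ'.length + r' := by simp [hδ']
  obtain ⟨_, -, ⟨ξ, hξ⟩, ξ', hξ'⟩ := hmeet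
  subst hε hδ'
  have h : PEqv (μ' ++ (List.replicate r' c ++ ξ')) (ν ++ (List.replicate s .B ++ ξ)) := by
    simpa using hξ'.symm.trans hξ
  simpa using peqv_or_extendsNontrivially_of_peqv (a := .B) trivial hc
    hS.2.2.2.1.eq_nil_or_getLast?_eq_G hS'.2.2.1.eq_nil_or_getLast?_eq_G hlen h

/-- Proposition 3.11 of the paper.  Let `j ≥ 1`, `ℓ ≥ 0`, `m = p_j + ℓ + 1`,
`j' ≥ j` and `ℓ' ≥ m`.  Suppose `(μ, ν) ∈ S_j` and `(μ', ν') ∈ S_{j'}`.  Let `δ = μ·α^r` and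
`ε = ν·β^s` where `r = p_j + ℓ − |μ|` and `s = p_j + ℓ − |ν|`, and let
`(δ', ε') = (μ'·c^{r'}, ν'·d^{s'}) ∈ S_{j',ℓ'}` where `{c, d} = {α, β}`.  If `ε ⩓ δ'`, then
either `μ' = ν` (as classes) or `μ'` is a nontrivial extension of `ε`. -/
theorem stmt4 (k : ℕ → ℕ) (hk0 : k 0 = 0)
    (hinf : {i : ℕ | 1 ≤ i ∧ k i ≠ 0}.Infinite)
    (p : ℕ → ℕ) (hp : Enumerates k p)
    (j ℓ j' ℓ' m : ℕ) (hj : 1 ≤ j) (hj' : j ≤ j') (hm : m = p j + ℓ + 1) (hℓ' : m ≤ ℓ')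
    (μ ν μ' ν' : List Letter) (hS : InS k p j μ ν) (hS' : InS k p j' μ' ν')
    (r s : ℕ) (hr : r = p j + ℓ - μ.length) (hs : s = p j + ℓ - ν.length)
    (δ ε : List Letter)
    (hδ : δ = μ ++ List.replicate r Letter.A) (hε : ε = ν ++ List.replicate s Letter.B)
    (c d : Letter) (hcd : (c = Letter.A ∧ d = Letter.B) ∨ (c = Letter.B ∧ d = Letter.A))
    (r' s' : ℕ) (δ' ε' : List Letter)
    (hδ' : δ' = μ' ++ List.replicate r' c) (hε' : ε' = ν' ++ List.replicate s' d)
    (hSJL : InSJL k p j' ℓ' δ' ε')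
    (hmeet : Meets k 1 ε δ') :
    PEqv μ' ν ∨ PExtendsNontrivially μ' ε :=
  stmt4_general k p hp j j' ℓ' hj' μ ν μ' ν' hS hS' s ε hε c d hcd r' δ' ε' hδ' hSJL hmeet
end

section
/- Let j > 1. Suppose μ, ν ∈ Λ(1) satisfy |μ| = |ν| < p_{j+1}, and let η and θ be Λ₁-words (composable with μ and ν respectively) with |μ·η| = |ν·θ|. Then there exist μ'', ν'' ∈ Φ_{p_j}, Λ₁-words η'' and θ'' with d(η'') ⊥ d(θ''), and a Λ₁-word ζ such that μ·η = μ''·η''·ζ and ν·θ = ν''·θ''·ζ in Λ(1). -/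
/-
Split `μ` after its last `Λ₂`-edge: `μ = μ₀·η₀` with `η₀` a `Λ₁`-word. If that edge is the
`n`-th letter of a path from `v_1`, then `k n ≠ 0`, so `n = p_i` for some `i`, and
`n ≤ |μ| < p_{j+1}` forces `i ≤ j`; hence `μ₀ ∈ Φ_{p_j}`, and likewise for `ν`. Letters of
`Λ₁`-words commute, so the class of a `Λ₁`-word is determined by its degree. Taking for `ζ`
the word whose degree is the coordinatewise minimum of `d(η₀·η)` and `d(θ₀·θ)`, the remaining
degrees `d(η₀·η) - d(ζ)` and `d(θ₀·θ) - d(ζ)` are orthogonal.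
-/

theorem PEqv.append_left_s6 (u : List Letter) {s t : List Letter} (h : PEqv s t) :
    PEqv (u ++ s) (u ++ t) := by
  induction h with
  | rel x y hxy =>
    obtain ⟨u', v, a, b, ha, hb, rfl, rfl⟩ := hxy
    exact Relation.EqvGen.rel _ _ ⟨u ++ u', v, a, b, ha, hb, by simp, by simp⟩
  | refl x => exact Relation.EqvGen.refl _
  | symm x y _ ih => exact Relation.EqvGen.symm _ _ ih
  | trans x y z _ _ ih₁ ih₂ => exact Relation.EqvGen.trans _ _ _ ih₁ ih₂

theorem IsLambda1.append {u v : List Letter} (hu : IsLambda1 u) (hv : IsLambda1 v) :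
    IsLambda1 (u ++ v) := by
  simpa [IsLambda1, or_imp, forall_and] using And.intro hu hv

theorem IsLambda1.of_perm {u v : List Letter} (h : u.Perm v) (hu : IsLambda1 u) :
    IsLambda1 v :=
  fun a ha => hu a (h.mem_iff.mpr ha)

theorem List.Perm.pEqv {w₁ w₂ : List Letter} (h : w₁.Perm w₂) (hw : IsLambda1 w₁) :
    PEqv w₁ w₂ := by
  induction h with
  | nil => exact Relation.EqvGen.refl _
  | cons x _ ih => exact PEqv.append_left_s6 [x] (ih fun a ha => hw a (List.mem_cons_of_mem _ ha))
  | swap x y l =>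
    exact Relation.EqvGen.rel _ _ ⟨[], l, y, x, hw y (by simp), hw x (by simp), rfl, rfl⟩
  | trans h₁₂ _ ih₁ ih₂ => exact Relation.EqvGen.trans _ _ _ (ih₁ hw) (ih₂ (hw.of_perm h₁₂))

def abWord (a b : ℕ) : List Letter := List.replicate a Letter.A ++ List.replicate b Letter.B

theorem isLambda1_abWord (a b : ℕ) : IsLambda1 (abWord a b) := by
  intro x hx
  rcases List.mem_append.mp hx with h | h <;>
    rw [List.eq_of_mem_replicate h] <;> trivial

@[simp] theorem count_A_abWord (a b : ℕ) : (abWord a b).count Letter.A = a := by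
  simp [abWord, List.count_replicate]

@[simp] theorem count_B_abWord (a b : ℕ) : (abWord a b).count Letter.B = b := by
  simp [abWord, List.count_replicate]

theorem pEqv_of_count_eq {w₁ w₂ : List Letter} (h₁ : IsLambda1 w₁) (h₂ : IsLambda1 w₂)
    (hA : w₁.count Letter.A = w₂.count Letter.A)
    (hB : w₁.count Letter.B = w₂.count Letter.B) : PEqv w₁ w₂ := by
  refine (List.perm_iff_count.mpr fun x => ?_).pEqv h₁
  cases x with
  | A => exact hA
  | B => exact hB
  | G n => rw [List.count_eq_zero.mpr (h₁ _), List.count_eq_zero.mpr (h₂ _)]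

theorem exists_degPerp_common_suffix {x y : List Letter} (hx : IsLambda1 x) (hy : IsLambda1 y) :
    ∃ η θ ζ : List Letter, IsLambda1 η ∧ IsLambda1 θ ∧ DegPerp η θ ∧ IsLambda1 ζ ∧
      PEqv x (η ++ ζ) ∧ PEqv y (θ ++ ζ) := by
  set a₁ := x.count Letter.A
  set b₁ := x.count Letter.B
  set a₂ := y.count Letter.A
  set b₂ := y.count Letter.B
  have hζ := isLambda1_abWord (min a₁ a₂) (min b₁ b₂)
  refine ⟨abWord (a₁ - a₂) (b₁ - b₂), abWord (a₂ - a₁) (b₂ - b₁), abWord (min a₁ a₂) (min b₁ b₂),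
    isLambda1_abWord _ _, isLambda1_abWord _ _, ?_, hζ,
    pEqv_of_count_eq hx ((isLambda1_abWord _ _).append hζ) ?_ ?_,
    pEqv_of_count_eq hy ((isLambda1_abWord _ _).append hζ) ?_ ?_⟩
  · simp only [DegPerp, count_A_abWord, count_B_abWord]
    rcases Nat.le_total a₁ a₂ with ha | ha <;> rcases Nat.le_total b₁ b₂ with hb | hb <;>
      simp [Nat.sub_eq_zero_of_le ha, Nat.sub_eq_zero_of_le hb]
  all_goals simp only [List.count_append, count_A_abWord, count_B_abWord]; omega

theorem exists_eq_append_isLambda1 (w : List Letter) :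
    ∃ w₀ w₁ : List Letter, w = w₀ ++ w₁ ∧ IsLambda1 w₁ ∧
      (w₀ = [] ∨ ∃ i, w₀.getLast? = some (Letter.G i)) := by
  induction w using List.reverseRecOn with
  | nil => exact ⟨[], [], rfl, fun _ h => absurd h List.not_mem_nil, Or.inl rfl⟩
  | append_singleton w a ih =>
    cases a
    case G i => exact ⟨w ++ [.G i], [], by simp, fun _ h => absurd h List.not_mem_nil, by simp⟩
    all_goals
      obtain ⟨w₀, w₁, rfl, hw₁, hw₀⟩ := ih
      exact ⟨w₀, _, List.append_assoc _ _ _, hw₁.append (by simp [IsLambda1, Letter.isAB]), hw₀⟩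

theorem IsPath.of_append {k : ℕ → ℕ} {m : ℕ} {u v : List Letter} (h : IsPath k m (u ++ v)) :
    IsPath k m u := by
  intro t i ht
  have := h ⟨t, by simp; omega⟩ i (by simpa [List.getElem_append_left t.isLt] using ht)
  simpa using this

theorem IsPath.k_length_ne_zero {k : ℕ → ℕ} {w : List Letter} (h : IsPath k 1 w) {i : ℕ}
    (hlast : w.getLast? = some (Letter.G i)) : k w.length ≠ 0 := by
  have hne : w ≠ [] := by rintro rfl; simp at hlast
  have hpos := List.length_pos_iff.mpr hne
  rw [List.getLast?_eq_getElem?, List.getElem?_eq_getElem (by omega), Option.some_inj] at hlast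
  have := h ⟨w.length - 1, by omega⟩ i (by simpa using hlast)
  rw [show 1 + (w.length - 1) = w.length by omega] at this
  omega

theorem Enumerates.le_of_lt_succ {k p : ℕ → ℕ} (hp : Enumerates k p) {n j : ℕ} (hn : 1 ≤ n)
    (hk : k n ≠ 0) (hlt : n < p (j + 1)) : n ≤ p j := by
  obtain ⟨i, rfl⟩ := hp.2.2.2 n hn hk
  exact hp.2.1.monotone (Nat.le_of_lt_succ (hp.2.1.lt_iff_lt.mp hlt))

theorem exists_eq_append_inPhi {k p : ℕ → ℕ} (hp : Enumerates k p) {j : ℕ} {w : List Letter}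
    (hw : IsPath k 1 w) (hlt : w.length < p (j + 1)) :
    ∃ w₀ w₁ : List Letter, w = w₀ ++ w₁ ∧ IsPath k 1 w₀ ∧ InPhi (p j) w₀ ∧ IsLambda1 w₁ := by
  obtain ⟨w₀, w₁, rfl, hw₁, hw₀ | ⟨i, hlast⟩⟩ := exists_eq_append_isLambda1 w
  · exact ⟨w₀, w₁, rfl, hw.of_append, Or.inl hw₀, hw₁⟩
  · have hpos : 1 ≤ w₀.length := List.length_pos_iff.mpr (by rintro rfl; simp at hlast)
    have hle : w₀.length ≤ p j := hp.le_of_lt_succ hpos (hw.of_append.k_length_ne_zero hlast)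
      (by simp at hlt; omega)
    exact ⟨w₀, w₁, rfl, hw.of_append, Or.inr ⟨hpos, hle, i, hlast⟩, hw₁⟩

theorem stmt6_general (k : ℕ → ℕ)
    (p : ℕ → ℕ) (hp : Enumerates k p)
    (j : ℕ)
    (μ ν : List Letter) (hμ : IsPath k 1 μ) (hν : IsPath k 1 ν)
    (hlen : μ.length = ν.length) (hlt : μ.length < p (j + 1))
    (η θ : List Letter) (hη : IsLambda1 η) (hθ : IsLambda1 θ) :
    ∃ μ'' ν'' η'' θ'' ζ : List Letter,
      IsPath k 1 μ'' ∧ IsPath k 1 ν'' ∧ InPhi (p j) μ'' ∧ InPhi (p j) ν'' ∧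
      IsLambda1 η'' ∧ IsLambda1 θ'' ∧ DegPerp η'' θ'' ∧ IsLambda1 ζ ∧
      PEqv (μ ++ η) (μ'' ++ η'' ++ ζ) ∧ PEqv (ν ++ θ) (ν'' ++ θ'' ++ ζ) := by
  obtain ⟨μ₀, η₀, rfl, hμ₀, hμ₀Φ, hη₀⟩ := exists_eq_append_inPhi hp hμ hlt
  obtain ⟨ν₀, θ₀, rfl, hν₀, hν₀Φ, hθ₀⟩ := exists_eq_append_inPhi hp hν (hlen ▸ hlt)
  obtain ⟨η'', θ'', ζ, hη'', hθ'', hperp, hζ, hημ, hθν⟩ :=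
    exists_degPerp_common_suffix (hη₀.append hη) (hθ₀.append hθ)
  refine ⟨μ₀, ν₀, η'', θ'', ζ, hμ₀, hν₀, hμ₀Φ, hν₀Φ, hη'', hθ'', hperp, hζ, ?_, ?_⟩
  · simpa only [List.append_assoc] using hημ.append_left_s6 μ₀
  · simpa only [List.append_assoc] using hθν.append_left_s6 ν₀

/-- cf. Theorem 3.2 of the paper.  Let `j > 1`.  If `μ, ν ∈ Λ(1)` have
`|μ| = |ν| < p_{j+1}` and `η, θ` are `Λ₁`-words, with `|μ·η| = |ν·θ|`, then there are
`μ'', ν'' ∈ Φ_{p_j}`, `Λ₁`-words `η'', θ''` with `d(η'') ⊥ d(θ'')`, and a `Λ₁`-word `ζ`, such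
that `μ·η = μ''·η''·ζ` and `ν·θ = ν''·θ''·ζ` in `Λ(1)`. -/
theorem stmt6 (k : ℕ → ℕ) (hk0 : k 0 = 0)
    (hinf : {i : ℕ | 1 ≤ i ∧ k i ≠ 0}.Infinite)
    (p : ℕ → ℕ) (hp : Enumerates k p)
    (j : ℕ) (hj : 1 < j)
    (μ ν : List Letter) (hμ : IsPath k 1 μ) (hν : IsPath k 1 ν)
    (hlen : μ.length = ν.length) (hlt : μ.length < p (j + 1))
    (η θ : List Letter) (hη : IsLambda1 η) (hθ : IsLambda1 θ)
    (hlen' : μ.length + η.length = ν.length + θ.length) :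
    ∃ μ'' ν'' η'' θ'' ζ : List Letter,
      IsPath k 1 μ'' ∧ IsPath k 1 ν'' ∧ InPhi (p j) μ'' ∧ InPhi (p j) ν'' ∧
      IsLambda1 η'' ∧ IsLambda1 θ'' ∧ DegPerp η'' θ'' ∧ IsLambda1 ζ ∧
      PEqv (μ ++ η) (μ'' ++ η'' ++ ζ) ∧ PEqv (ν ++ θ) (ν'' ++ θ'' ++ ζ) :=
  stmt6_general k p hp j μ ν hμ hν hlen hlt η θ hη hθ
end

section
/- The closure in L²(X, μ) of span{1_F : F ∈ Q_n for some n ≥ 0} equals the closure of the sum ℂ·1_X + Σ_{n ≥ 0} Σ_{E ∈ Q_n} K(E), and this sum is orthogonal: ℂ·1_X is orthogonal to every K(E), and K(E) is orthogonal to K(E') whenever E ∈ Q_n, E' ∈ Q_t and (n, E) ≠ (t, E'). -/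
open MeasureTheory Submodule
open scoped ComplexInnerProductSpace Classical

/-- The indicator function `1_s` of a set `s`, regarded as an element of `L²(X, μ)`
(and `0` if `s` is not measurable, a case we never use). -/
noncomputable def ind {X : Type*} [MeasurableSpace X] (μ : Measure X) [IsFiniteMeasure μ]
    (s : Set X) : Lp ℂ 2 μ :=
  if h : MeasurableSet s then indicatorConstLp 2 h (measure_ne_top μ s) (1 : ℂ) else 0

/-- `Q` is a sequence of finite measurable partitions of `X`, with `Q 0 = {X}` and with
`Q (n+1)` refining `Q n`. -/
def IsPartitionSeq {X : Type*} [MeasurableSpace X] (Q : ℕ → Finset (Set X)) : Prop :=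
  Q 0 = {Set.univ} ∧
  (∀ n, ∀ s ∈ Q n, MeasurableSet s) ∧
  (∀ n, ∀ s ∈ Q n, ∀ t ∈ Q n, s ≠ t → s ∩ t = ∅) ∧
  (∀ n, ⋃ s ∈ Q n, s = Set.univ) ∧
  (∀ n, ∀ s ∈ Q (n + 1), ∃ t ∈ Q n, s ⊆ t)

/-- For `E ∈ Q n`, the subspace
`K(E) = span{1_F : F ∈ Q_{n+1}, F ⊆ E} ∩ {1_E}^⊥` of `L²(X, μ)`. -/
noncomputable def Ksp {X : Type*} [MeasurableSpace X] (μ : Measure X) [IsFiniteMeasure μ]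
    (Q : ℕ → Finset (Set X)) (n : ℕ) (E : Set X) : Submodule ℂ (Lp ℂ 2 μ) :=
  (span ℂ {f | ∃ F ∈ Q (n + 1), F ⊆ E ∧ f = ind μ F}) ⊓ (ℂ ∙ ind μ E)ᗮ

/-! Since `1_E` lies in the span `V(E)` of the indicators of the children of `E`, the
finite-dimensional line `ℂ·1_E` splits `V(E)` orthogonally as `ℂ·1_E ⊕ K(E)`. Going down the
levels, every `1_F` with `F ∈ Q_n` therefore lies in `ℂ·1_X + Σ K(E)`, so the two spans agree
even before taking closures.

For the orthogonality, a vector of `K(E')` is orthogonal to `1_A` whenever `A` contains or misses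
`E'`: against the children of `E'`, `1_A` pairs like `1_{E'}` or like `0`. If `E ∈ Q_n`, `n ≤ t`
and `E' ∈ Q_t`, every child of `E` is such a set relative to `E'`. -/

section

variable {X : Type*} [MeasurableSpace X] {μ : Measure X} [IsFiniteMeasure μ]
  {Q : ℕ → Finset (Set X)}

lemma ind_of_measurableSet {s : Set X} (hs : MeasurableSet s) :
    ind μ s = indicatorConstLp 2 hs (measure_ne_top μ s) (1 : ℂ) :=
  dif_pos hs

lemma inner_ind_ind {s t : Set X} (hs : MeasurableSet s) (ht : MeasurableSet t) :
    ⟪ind μ s, ind μ t⟫ = (μ.real (t ∩ s) : ℂ) := by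
  rw [ind_of_measurableSet hs, ind_of_measurableSet ht,
    L2.inner_indicatorConstLp_one hs (measure_ne_top μ s),
    setIntegral_indicatorConstLp hs ht (measure_ne_top μ t) (1 : ℂ)]
  simp

lemma ind_union {s t : Set X} (hs : MeasurableSet s) (ht : MeasurableSet t)
    (hst : Disjoint s t) : ind μ (s ∪ t) = ind μ s + ind μ t := by
  rw [ind_of_measurableSet (hs.union ht), ind_of_measurableSet hs, ind_of_measurableSet ht,
    indicatorConstLp_disjoint_union hs ht (measure_ne_top μ s) (measure_ne_top μ t) hst]

lemma ind_biUnion_finset {ι : Type*} (s : Finset ι) {t : ι → Set X}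
    (hm : ∀ i ∈ s, MeasurableSet (t i)) (hd : (s : Set ι).PairwiseDisjoint t) :
    ind μ (⋃ i ∈ s, t i) = ∑ i ∈ s, ind μ (t i) := by
  induction s using Finset.induction_on with
  | empty => simp [ind, indicatorConstLp_empty]
  | insert a s ha ih =>
    rw [Finset.coe_insert, Set.pairwiseDisjoint_insert] at hd
    have hdisj : Disjoint (t a) (⋃ i ∈ s, t i) :=
      Set.disjoint_iUnion₂_right.2 fun i hi => hd.2 i hi (ne_of_mem_of_not_mem hi ha).symm
    rw [Finset.set_biUnion_insert, Finset.sum_insert ha,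
      ind_union (hm a (s.mem_insert_self a))
        (s.measurableSet_biUnion fun i hi => hm i (Finset.mem_insert_of_mem hi)) hdisj,
      ih (fun i hi => hm i (Finset.mem_insert_of_mem hi)) hd.1]

namespace IsPartitionSeq

lemma univ_mem (hQ : IsPartitionSeq Q) : Set.univ ∈ Q 0 := by
  rw [hQ.1]
  exact Finset.mem_singleton_self _

lemma measurableSet (hQ : IsPartitionSeq Q) {n : ℕ} {s : Set X} (hs : s ∈ Q n) :
    MeasurableSet s :=
  hQ.2.1 n s hs

lemma pairwiseDisjoint (hQ : IsPartitionSeq Q) (n : ℕ) :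
    (Q n : Set (Set X)).PairwiseDisjoint id :=
  fun s hs t ht hst => Set.disjoint_iff_inter_eq_empty.2 (hQ.2.2.1 n s hs t ht hst)

lemma exists_superset_of_le (hQ : IsPartitionSeq Q) {m t : ℕ} (hmt : m ≤ t) {s : Set X}
    (hs : s ∈ Q t) : ∃ u ∈ Q m, s ⊆ u := by
  induction t, hmt using Nat.le_induction generalizing s with
  | base => exact ⟨s, hs, subset_rfl⟩
  | succ t _ ih =>
    obtain ⟨u, hu, hsu⟩ := hQ.2.2.2.2 t s hs
    obtain ⟨v, hv, huv⟩ := ih hu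
    exact ⟨v, hv, hsu.trans huv⟩

lemma subset_or_disjoint (hQ : IsPartitionSeq Q) {m t : ℕ} (hmt : m ≤ t) {s u : Set X}
    (hs : s ∈ Q m) (hu : u ∈ Q t) : u ⊆ s ∨ Disjoint s u := by
  obtain ⟨v, hv, huv⟩ := hQ.exists_superset_of_le hmt hu
  by_cases hsv : s = v
  · exact .inl (hsv ▸ huv)
  · exact .inr ((hQ.pairwiseDisjoint m hs hv hsv).mono_right huv)

lemma biUnion_children (hQ : IsPartitionSeq Q) {n : ℕ} {E : Set X} (hE : E ∈ Q n) :
    ⋃ F ∈ (Q (n + 1)).filter (· ⊆ E), F = E := by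
  refine subset_antisymm (Set.iUnion₂_subset fun F hF => (Finset.mem_filter.1 hF).2) ?_
  intro x hxE
  obtain ⟨F, hF, hxF⟩ := Set.mem_iUnion₂.1 (hQ.2.2.2.1 (n + 1) ▸ Set.mem_univ x)
  obtain ⟨E', hE', hFE'⟩ := hQ.2.2.2.2 n F hF
  have hE'E : E' = E := by
    by_contra hne
    exact Set.disjoint_left.1 (hQ.pairwiseDisjoint n hE' hE hne) (hFE' hxF) hxE
  exact Set.mem_iUnion₂.2 ⟨F, Finset.mem_filter.2 ⟨hF, hE'E ▸ hFE'⟩, hxF⟩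

end IsPartitionSeq

noncomputable def childSpan (μ : Measure X) [IsFiniteMeasure μ] (Q : ℕ → Finset (Set X))
    (n : ℕ) (E : Set X) : Submodule ℂ (Lp ℂ 2 μ) :=
  span ℂ {f | ∃ F ∈ Q (n + 1), F ⊆ E ∧ f = ind μ F}

lemma Ksp_le_childSpan (n : ℕ) (E : Set X) : Ksp μ Q n E ≤ childSpan μ Q n E :=
  inf_le_left

lemma ind_mem_childSpan (hQ : IsPartitionSeq Q) {n : ℕ} {E : Set X} (hE : E ∈ Q n) :
    ind μ E ∈ childSpan μ Q n E := by
  have hsum := ind_biUnion_finset (μ := μ) ((Q (n + 1)).filter (· ⊆ E)) (t := id)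
    (fun F hF => hQ.measurableSet (Finset.mem_filter.1 hF).1)
    ((hQ.pairwiseDisjoint (n + 1)).subset (Finset.coe_subset.2 (Finset.filter_subset _ _)))
  simp only [id, hQ.biUnion_children hE] at hsum
  rw [hsum]
  exact sum_mem fun F hF =>
    subset_span ⟨F, (Finset.mem_filter.1 hF).1, (Finset.mem_filter.1 hF).2, rfl⟩

lemma childSpan_eq_sup_Ksp (hQ : IsPartitionSeq Q) {n : ℕ} {E : Set X} (hE : E ∈ Q n) :
    childSpan μ Q n E = (ℂ ∙ ind μ E) ⊔ Ksp μ Q n E := by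
  rw [Ksp, inf_comm]
  exact (sup_orthogonal_inf_of_hasOrthogonalProjection
    ((span_singleton_le_iff_mem _ _).2 (ind_mem_childSpan hQ hE))).symm

lemma ind_mem_sup_Ksp (hQ : IsPartitionSeq Q) (n : ℕ) {F : Set X} (hF : F ∈ Q n) :
    ind μ F ∈ (ℂ ∙ ind μ Set.univ) ⊔ ⨆ n, ⨆ E ∈ Q n, Ksp μ Q n E := by
  induction n generalizing F with
  | zero =>
    rw [hQ.1, Finset.mem_singleton] at hF
    exact mem_sup_left (hF ▸ mem_span_singleton_self _)
  | succ n ih =>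
    obtain ⟨E, hE, hFE⟩ := hQ.exists_superset_of_le n.le_succ hF
    have hF_child : ind μ F ∈ childSpan μ Q n E := subset_span ⟨F, hF, hFE, rfl⟩
    rw [childSpan_eq_sup_Ksp hQ hE] at hF_child
    refine sup_le ((span_singleton_le_iff_mem _ _).2 (ih hE)) ?_ hF_child
    exact le_sup_of_le_right (le_iSup_of_le n (le_iSup₂_of_le E hE le_rfl))

lemma span_ind_eq_sup_Ksp (hQ : IsPartitionSeq Q) :
    span ℂ {f | ∃ n : ℕ, ∃ F ∈ Q n, f = ind μ F} =
      (ℂ ∙ ind μ Set.univ) ⊔ ⨆ n, ⨆ E ∈ Q n, Ksp μ Q n E := by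
  refine le_antisymm (span_le.2 ?_) (sup_le ?_ (iSup_le fun n => iSup₂_le fun E _ => ?_))
  · rintro _ ⟨n, F, hF, rfl⟩
    exact ind_mem_sup_Ksp hQ n hF
  · exact (span_singleton_le_iff_mem _ _).2 (subset_span ⟨0, _, hQ.univ_mem, rfl⟩)
  · refine (Ksp_le_childSpan n E).trans (span_mono ?_)
    rintro _ ⟨F, hF, -, rfl⟩
    exact ⟨n + 1, F, hF, rfl⟩

lemma ind_mem_orthogonal_childSpan (hQ : IsPartitionSeq Q) {A E : Set X}
    (hA : MeasurableSet A) (hAE : Disjoint A E) (n : ℕ) :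
    ind μ A ∈ (childSpan μ Q n E)ᗮ := by
  refine isOrtho_span.2 ?_ (mem_span_singleton_self _)
  rintro _ rfl _ ⟨F, hF, hFE, rfl⟩
  rw [inner_ind_ind hA (hQ.measurableSet hF), (hAE.mono_right hFE).symm.inter_eq]
  simp

lemma ind_mem_orthogonal_Ksp (hQ : IsPartitionSeq Q) {n : ℕ} {A E : Set X} (hE : E ∈ Q n)
    (hA : MeasurableSet A) (hAE : E ⊆ A ∨ Disjoint A E) :
    ind μ A ∈ (Ksp μ Q n E)ᗮ := by
  have h_disj {B : Set X} (hB : MeasurableSet B) (hBE : Disjoint B E) :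
      ind μ B ∈ (Ksp μ Q n E)ᗮ :=
    orthogonal_le (Ksp_le_childSpan n E) (ind_mem_orthogonal_childSpan hQ hB hBE n)
  rcases hAE with hEA | hAE
  · have hE_ortho : ind μ E ∈ (Ksp μ Q n E)ᗮ :=
      (isOrtho_iff_le.2 (inf_le_right : Ksp μ Q n E ≤ _)).symm (mem_span_singleton_self _)
    have hAdiff := hA.diff (hQ.measurableSet hE)
    rw [← Set.sdiff_union_of_subset hEA,
      ind_union hAdiff (hQ.measurableSet hE) Set.disjoint_sdiff_left]
    exact add_mem (h_disj hAdiff Set.disjoint_sdiff_left) hE_ortho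
  · exact h_disj hA hAE

lemma Ksp_isOrtho_of_le (hQ : IsPartitionSeq Q) {n t : ℕ} (hnt : n ≤ t) {E E' : Set X}
    (hE : E ∈ Q n) (hE' : E' ∈ Q t) (hne : (n, E) ≠ (t, E')) :
    Ksp μ Q n E ⟂ Ksp μ Q t E' := by
  refine (Ksp_le_childSpan n E).trans (span_le.2 ?_)
  rintro _ ⟨F, hF, hFE, rfl⟩
  refine ind_mem_orthogonal_Ksp hQ hE' (hQ.measurableSet hF) ?_
  rcases hnt.lt_or_eq with hlt | rfl
  · exact hQ.subset_or_disjoint hlt hF hE'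
  · have hEE' : E ≠ E' := fun h => hne (h ▸ rfl)
    exact .inr ((hQ.pairwiseDisjoint n hE hE' hEE').mono_left hFE)

end

/-- The closure of `span{1_F : F ∈ Q n for some n}` in `L²(X, μ)` equals the
closure of `ℂ·1_X + Σ_{n ≥ 0} Σ_{E ∈ Q n} K(E)`, and this sum is orthogonal: `ℂ·1_X ⟂ K(E)` for
every `E`, and `K(E) ⟂ K(E')` whenever `E ∈ Q n`, `E' ∈ Q t` and `(n, E) ≠ (t, E')`. -/
theorem stmt11 {X : Type*} [MeasurableSpace X] (μ : Measure X) [IsFiniteMeasure μ]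
    (Q : ℕ → Finset (Set X)) (hQ : IsPartitionSeq Q) :
    (span ℂ {f | ∃ n : ℕ, ∃ F ∈ Q n, f = ind μ F}).topologicalClosure =
      ((ℂ ∙ ind μ Set.univ) ⊔ ⨆ n : ℕ, ⨆ E ∈ Q n, Ksp μ Q n E).topologicalClosure ∧
    (∀ n : ℕ, ∀ E ∈ Q n, ∀ w ∈ Ksp μ Q n E, ⟪ind μ Set.univ, w⟫ = 0) ∧
    (∀ n t : ℕ, ∀ E ∈ Q n, ∀ E' ∈ Q t, (n, E) ≠ (t, E') →
      ∀ x ∈ Ksp μ Q n E, ∀ y ∈ Ksp μ Q t E', ⟪x, y⟫ = 0) := by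
  refine ⟨congrArg _ (span_ind_eq_sup_Ksp hQ), ?_, ?_⟩
  · intro n E hE w hw
    exact inner_left_of_mem_orthogonal hw
      (ind_mem_orthogonal_Ksp hQ hE MeasurableSet.univ (.inl (Set.subset_univ E)))
  · intro n t E hE E' hE' hne
    rw [← isOrtho_iff_inner_eq]
    rcases le_total n t with hnt | htn
    · exact Ksp_isOrtho_of_le hQ hnt hE hE' hne
    · exact (Ksp_isOrtho_of_le hQ htn hE' hE hne.symm).symm
end
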